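/- Let Ψ : 𝕊¹ ⊂ ℝ³ → ℝ⁹ be smooth on the unit sphere and define F(ξ) = D(∇_ξ)^T(ρ⁻²Ψ(θ)) for ξ ∈ ℝ³ \ {0}, ρ = |ξ|, θ = ξ/ρ, so F(ξ) = ρ⁻³𝓕(θ). Then ∫_{𝕊₁} 𝓕(θ) ds_θ = 0 ∈ ℝ⁴. -/

import Mathlib

open Matrix MeasureTheory Metric

/-- The 9×4 symbol matrix `D(n)` of the piezoelectric operator. -/
noncomputable def Dsym (n : Fin 3 → ℝ) : Matrix (Fin 9) (Fin 4) ℝ :=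
  !![n 0, 0, 0, 0;
     0, n 1, 0, 0;
     0, 0, n 2, 0;
     0, (n 2) / Real.sqrt 2, (n 1) / Real.sqrt 2, 0;
     (n 2) / Real.sqrt 2, 0, (n 0) / Real.sqrt 2, 0;
     (n 1) / Real.sqrt 2, (n 0) / Real.sqrt 2, 0, 0;
     0, 0, 0, n 0;
     0, 0, 0, n 1;
     0, 0, 0, n 2]

/-- The first-order divergence-type operator `D(∇)^T` of piezoelectricity
applied to a 9-column field `w`. -/
noncomputable def divD (w : EuclideanSpace ℝ (Fin 3) → Fin 9 → ℝ)
    (x : EuclideanSpace ℝ (Fin 3)) : Fin 4 → ℝ :=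
  fun k => ∑ p : Fin 9, ∑ i : Fin 3,
    Dsym (fun l => if l = i then 1 else 0) p k
      * fderiv ℝ (fun y => w y p) x (EuclideanSpace.single i 1)


open Set Filter

local notation "E3" => EuclideanSpace ℝ (Fin 3)

section Helpers

variable {E : Type*} [NormedAddCommGroup E] [NormedSpace ℝ E]

lemma my_integral_fderiv_eq_zero [MeasurableSpace E] [BorelSpace E] [FiniteDimensional ℝ E]
    (μ : Measure E) [μ.IsAddHaarMeasure]
    {u : E → ℝ} (hu : ContDiff ℝ 1 u) (hcs : HasCompactSupport u) (v : E) :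
    ∫ x, fderiv ℝ u x v ∂μ = 0 := by
  obtain ⟨D, hD⟩ := hu.lipschitzWith_of_hasCompactSupport hcs one_ne_zero
  have h1 : LipschitzWith 1 (fun _ : E => (1:ℝ)) := LipschitzWith.const' _
  have key := LipschitzWith.integral_lineDeriv_mul_eq (μ := μ) h1 hD hcs (-v)
  have hzero : ∀ x : E, lineDeriv ℝ (fun _ : E => (1:ℝ)) x (-v) = 0 := by
    intro x
    rw [(differentiableAt_const (1:ℝ)).lineDeriv_eq_fderiv]
    simp
  have hld : ∀ x : E, lineDeriv ℝ u x v = fderiv ℝ u x v := fun x =>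
    (hu.differentiable one_ne_zero x).lineDeriv_eq_fderiv
  simp only [hzero, zero_mul, integral_zero, neg_neg, hld, mul_one] at key
  exact key.symm

lemma my_fderiv_scale {f : E → ℝ} {x v : E} {r s : ℝ} (hr : r ≠ 0)
    (hf : ∀ y, f (r • y) = s * f y) (hx : DifferentiableAt ℝ f (r • x))
    (hx' : DifferentiableAt ℝ f x) :
    fderiv ℝ f (r • x) v = (s / r) * fderiv ℝ f x v := by
  have h1 : HasFDerivAt (fun y => f (r • y))
      ((fderiv ℝ f (r • x)).comp (r • (ContinuousLinearMap.id ℝ E))) x := by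
    have hsm : HasFDerivAt (fun y : E => r • y) (r • ContinuousLinearMap.id ℝ E) x :=
      (hasFDerivAt_id x).const_smul r
    exact hx.hasFDerivAt.comp x hsm
  have h2 : HasFDerivAt (fun y => f (r • y)) (s • fderiv ℝ f x) x := by
    have := hx'.hasFDerivAt.const_smul s
    exact (funext hf : (fun y => f (r • y)) = fun y => s * f y) ▸ this
  have := h1.unique h2
  have happ := congrArg (fun L : E →L[ℝ] ℝ => L v) this
  simp only [ContinuousLinearMap.comp_apply, ContinuousLinearMap.smul_apply,
    ContinuousLinearMap.coe_smul', Pi.smul_apply, ContinuousLinearMap.id_apply,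
    smul_eq_mul, _root_.map_smul] at happ
  field_simp at happ ⊢
  linarith [happ]

end Helpers

lemma my_volumeIoiPow_integral (a : ℝ → ℝ) :
    ∫ r : Ioi (0:ℝ), a ↑r ∂(Measure.volumeIoiPow 2) = ∫ r in Ioi (0:ℝ), r^2 * a r := by
  simp only [Measure.volumeIoiPow, ENNReal.ofReal]
  rw [integral_withDensity_eq_integral_smul (by fun_prop)]
  rw [integral_subtype_comap measurableSet_Ioi (fun r : ℝ => Real.toNNReal (r ^ 2) • a r)]
  refine setIntegral_congr_fun measurableSet_Ioi fun r hr => ?_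
  simp [NNReal.smul_def, Real.coe_toNNReal _ (by positivity : (0:ℝ) ≤ r^2)]

lemma my_polar (f : E3 → ℝ) (h : sphere (0:E3) 1 → ℝ) (a : ℝ → ℝ)
    (hf : ∀ (θ : sphere (0:E3) 1) (r : Ioi (0:ℝ)), f ((r:ℝ) • (θ:E3)) = h θ * a r) :
    ∫ x, f x = (∫ θ, h θ ∂((volume : Measure E3).toSphere)) * ∫ r in Ioi (0:ℝ), r^2 * a r := by
  have hdim : Module.finrank ℝ E3 - 1 = 2 := by
    rw [finrank_euclideanSpace_fin]
  calc ∫ x, f x = ∫ x : ({(0:E3)}ᶜ : Set E3), f x.1 ∂((volume : Measure E3).comap (↑)) := by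
        rw [integral_subtype_comap (measurableSet_singleton _).compl fun x => f x,
          restrict_compl_singleton]
    _ = ∫ y : sphere (0:E3) 1 × Ioi (0:ℝ), f ((y.2 : ℝ) • (y.1 : E3))
          ∂((volume : Measure E3).toSphere.prod
            (Measure.volumeIoiPow (Module.finrank ℝ E3 - 1))) := by
        rw [← ((volume : Measure E3).measurePreserving_homeomorphUnitSphereProd.integral_comp
          (Homeomorph.measurableEmbedding _)
          (fun y : sphere (0:E3) 1 × Ioi (0:ℝ) => f ((y.2 : ℝ) • (y.1 : E3))))]
        refine integral_congr_ae (Filter.Eventually.of_forall fun x => ?_)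
        have hx : (x : E3) ≠ 0 := x.2
        simp only [homeomorphUnitSphereProd_apply_fst_coe,
          homeomorphUnitSphereProd_apply_snd_coe]
        rw [smul_inv_smul₀ (norm_ne_zero_iff.2 hx)]
    _ = _ := by
        rw [hdim]
        simp only [hf]
        rw [integral_prod_mul (μ := (volume : Measure E3).toSphere)
          (ν := Measure.volumeIoiPow 2) h (fun r : Ioi (0:ℝ) => a r), my_volumeIoiPow_integral]

lemma my_g_smooth {φ : E3 → ℝ} (hφ : ContDiff ℝ (⊤ : ℕ∞) φ) {x : E3} (hx : x ≠ 0) :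
    ContDiffAt ℝ (⊤ : ℕ∞) (fun ξ : E3 => (‖ξ‖^2)⁻¹ * φ (‖ξ‖⁻¹ • ξ)) x := by
  have hn : ContDiffAt ℝ (⊤ : ℕ∞) (fun ξ : E3 => ‖ξ‖) x :=
    (contDiffAt_id.norm ℝ hx)
  have hnx : ‖x‖ ≠ 0 := norm_ne_zero_iff.2 hx
  have h1 : ContDiffAt ℝ (⊤ : ℕ∞) (fun ξ : E3 => (‖ξ‖^2)⁻¹) x :=
    (hn.pow 2).inv (pow_ne_zero 2 hnx)
  have h2 : ContDiffAt ℝ (⊤ : ℕ∞) (fun ξ : E3 => φ (‖ξ‖⁻¹ • ξ)) x := by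
    have : ContDiffAt ℝ (⊤ : ℕ∞) (fun ξ : E3 => ‖ξ‖⁻¹ • ξ) x :=
      (hn.inv hnx).smul contDiffAt_id
    exact (hφ.contDiffAt).comp x this
  exact h1.mul h2

lemma my_g_hom {φ : E3 → ℝ} {r : ℝ} (hr : 0 < r) (y : E3) :
    (‖r • y‖^2)⁻¹ * φ (‖r • y‖⁻¹ • (r • y)) = (r^2)⁻¹ * ((‖y‖^2)⁻¹ * φ (‖y‖⁻¹ • y)) := by
  rcases eq_or_ne y 0 with rfl | hy
  · simp
  · have hny : ‖y‖ ≠ 0 := norm_ne_zero_iff.2 hy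
    have h1 : ‖r • y‖ = r * ‖y‖ := by
      rw [norm_smul, Real.norm_eq_abs, abs_of_pos hr]
    have h2 : ‖r • y‖⁻¹ • (r • y) = ‖y‖⁻¹ • y := by
      rw [h1, smul_smul, mul_inv]
      congr 1
      field_simp
    rw [h2, h1, mul_pow, mul_inv, mul_assoc]

noncomputable def χb : ContDiffBump (2:ℝ) := ⟨1/2, 1, by norm_num, by norm_num⟩

lemma χb_zero_lt {r : ℝ} (hr : r < 1) : χb r = 0 :=
  χb.zero_of_le_dist (by rw [Real.dist_eq]; rw [abs_of_nonpos (by norm_num [χb] at *; linarith)]; norm_num [χb]; linarith)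

lemma χb_zero_gt {r : ℝ} (hr : 3 < r) : χb r = 0 :=
  χb.zero_of_le_dist (by rw [Real.dist_eq, abs_of_nonneg (by linarith)]; norm_num [χb]; linarith)

lemma χb_deriv_zero_lt {r : ℝ} (hr : r < 1) : deriv (χb : ℝ → ℝ) r = 0 := by
  have h : (χb : ℝ → ℝ) =ᶠ[nhds r] fun _ => 0 := by
    filter_upwards [Iio_mem_nhds hr] with y hy using χb_zero_lt hy
  rw [h.deriv_eq, deriv_const]

lemma χb_deriv_zero_gt {r : ℝ} (hr : 3 < r) : deriv (χb : ℝ → ℝ) r = 0 := by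
  have h : (χb : ℝ → ℝ) =ᶠ[nhds r] fun _ => 0 := by
    filter_upwards [Ioi_mem_nhds hr] with y hy using χb_zero_gt hy
  rw [h.deriv_eq, deriv_const]

lemma my_main {φ : E3 → ℝ} (hφ : ContDiff ℝ (⊤ : ℕ∞) φ) (v : E3) :
    ∫ θ : sphere (0:E3) 1, fderiv ℝ (fun ξ : E3 => (‖ξ‖^2)⁻¹ * φ (‖ξ‖⁻¹ • ξ)) (θ:E3) v
      ∂((volume : Measure E3).toSphere) = 0 := by
  set g : E3 → ℝ := fun ξ => (‖ξ‖^2)⁻¹ * φ (‖ξ‖⁻¹ • ξ) with hg_def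
  set u : E3 → ℝ := fun x => χb ‖x‖ * g x with hu_def
  set nrm : E3 → ℝ := fun y => ‖y‖ with hnrm_def
  -- local vanishing of u near small norms
  have hu_loc0 : ∀ x : E3, ‖x‖ < 1 → u =ᶠ[nhds x] fun _ => 0 := by
    intro x hx
    have : IsOpen {y : E3 | ‖y‖ < 1} := isOpen_lt continuous_norm continuous_const
    filter_upwards [this.mem_nhds hx] with y hy
    simp [hu_def, χb_zero_lt hy]
  have hu_smooth : ContDiff ℝ ((⊤:ℕ∞):WithTop ℕ∞) u := by
    rw [contDiff_iff_contDiffAt]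
    intro x
    by_cases h1 : ‖x‖ < 1
    · exact contDiffAt_const.congr_of_eventuallyEq (hu_loc0 x h1)
    · have hx : x ≠ 0 := fun h => h1 (by simp [h])
      exact (((χb.contDiff (n := (⊤:ℕ∞))).contDiffAt).comp x ((contDiffAt_id.norm ℝ hx).of_le le_top)).mul ((my_g_smooth hφ hx).of_le (by simp))
  have hu_supp : HasCompactSupport u := by
    refine HasCompactSupport.intro (isCompact_closedBall (0:E3) 3) fun x hx => ?_
    have : (3:ℝ) < ‖x‖ := by
      simpa [mem_closedBall, dist_zero_right] using hx
    simp [hu_def, χb_zero_gt this]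
  have h0 : ∫ x, fderiv ℝ u x v = 0 :=
    my_integral_fderiv_eq_zero volume (hu_smooth.of_le (by exact_mod_cast le_top)) hu_supp v
  -- the two pieces
  set A : E3 → ℝ := fun x => (deriv (χb : ℝ → ℝ) ‖x‖ * fderiv ℝ nrm x v) * g x with hA_def
  set B : E3 → ℝ := fun x => χb ‖x‖ * fderiv ℝ g x v with hB_def
  have hAB : ∀ x, fderiv ℝ u x v = A x + B x := by
    intro x
    by_cases h1 : ‖x‖ < 1
    · have hu0 : fderiv ℝ u x = 0 := by
        rw [(hu_loc0 x h1).fderiv_eq]; exact fderiv_const_apply 0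
      simp [hA_def, hB_def, hu0, χb_zero_lt h1, χb_deriv_zero_lt h1]
    · have hx : x ≠ 0 := fun h => h1 (by simp [h])
      have hnormd : HasFDerivAt nrm (fderiv ℝ nrm x) x :=
        ((contDiffAt_id.norm ℝ hx).differentiableAt one_ne_zero).hasFDerivAt
      have hχd : HasDerivAt (χb : ℝ → ℝ) (deriv (χb : ℝ → ℝ) ‖x‖) ‖x‖ :=
        ((χb.contDiff (n := (⊤:ℕ∞))).differentiable (by simp) ‖x‖).hasDerivAt
      have hχnorm : HasFDerivAt (fun y : E3 => χb ‖y‖)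
          (deriv (χb : ℝ → ℝ) ‖x‖ • fderiv ℝ nrm x) x := hχd.comp_hasFDerivAt x hnormd
      have hgd : HasFDerivAt g (fderiv ℝ g x) x :=
        ((my_g_smooth hφ hx).differentiableAt (by simp)).hasFDerivAt
      have hud : HasFDerivAt u
          (χb ‖x‖ • fderiv ℝ g x + g x • (deriv (χb : ℝ → ℝ) ‖x‖ • fderiv ℝ nrm x)) x :=
        hχnorm.mul hgd
      rw [hud.fderiv]
      simp only [hA_def, hB_def, ContinuousLinearMap.add_apply, ContinuousLinearMap.smul_apply,
        smul_eq_mul]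
      ring
  -- continuity of fderivs on the complement of 0
  have hgC : ContDiffOn ℝ (⊤ : ℕ∞) g {(0:E3)}ᶜ := fun y hy => (my_g_smooth hφ hy).contDiffWithinAt
  have hg_fd : ContinuousOn (fderiv ℝ g) {(0:E3)}ᶜ :=
    hgC.continuousOn_fderiv_of_isOpen isOpen_compl_singleton (by simp)
  have hnC : ContDiffOn ℝ (⊤ : ℕ∞) nrm {(0:E3)}ᶜ := fun y hy => (contDiffAt_id.norm ℝ hy).contDiffWithinAt
  have hn_fd : ContinuousOn (fderiv ℝ nrm) {(0:E3)}ᶜ :=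
    hnC.continuousOn_fderiv_of_isOpen isOpen_compl_singleton (by simp)
  have hopen : IsOpen {y : E3 | ‖y‖ < 1} := isOpen_lt continuous_norm continuous_const
  have hA_cont : Continuous A := by
    rw [continuous_iff_continuousAt]
    intro x
    by_cases h1 : ‖x‖ < 1
    · have hAe : A =ᶠ[nhds x] (fun _ => (0:ℝ)) := by
        filter_upwards [hopen.mem_nhds h1] with y hy
        simp [hA_def, χb_deriv_zero_lt hy]
      exact (continuousAt_const (y := (0:ℝ))).congr hAe.symm
    · have hx : x ≠ 0 := fun h => h1 (by simp [h])
      have hmem : x ∈ ({(0:E3)}ᶜ : Set E3) := hx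
      have c1 : ContinuousAt (fun y : E3 => deriv (χb : ℝ → ℝ) ‖y‖) x :=
        (((χb.contDiff (n := (⊤:ℕ∞))).continuous_deriv (by simp)).comp continuous_norm).continuousAt
      have c2 : ContinuousAt (fun y : E3 => fderiv ℝ nrm y v) x :=
        (ContinuousLinearMap.apply ℝ ℝ v).continuous.continuousAt.comp
          (hn_fd.continuousAt (isOpen_compl_singleton.mem_nhds hmem))
      have c3 : ContinuousAt g x := (my_g_smooth hφ hx).continuousAt
      exact ((c1.mul c2).mul c3)
  have hB_cont : Continuous B := by
    rw [continuous_iff_continuousAt]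
    intro x
    by_cases h1 : ‖x‖ < 1
    · have hBe : B =ᶠ[nhds x] (fun _ => (0:ℝ)) := by
        filter_upwards [hopen.mem_nhds h1] with y hy
        simp [hB_def, χb_zero_lt hy]
      exact (continuousAt_const (y := (0:ℝ))).congr hBe.symm
    · have hx : x ≠ 0 := fun h => h1 (by simp [h])
      have hmem : x ∈ ({(0:E3)}ᶜ : Set E3) := hx
      have c1 : ContinuousAt (fun y : E3 => (χb ‖y‖ : ℝ)) x :=
        (χb.continuous.comp continuous_norm).continuousAt
      have c2 : ContinuousAt (fun y : E3 => fderiv ℝ g y v) x :=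
        (ContinuousLinearMap.apply ℝ ℝ v).continuous.continuousAt.comp
          (hg_fd.continuousAt (isOpen_compl_singleton.mem_nhds hmem))
      exact c1.mul c2
  have hA_supp : HasCompactSupport A := by
    refine HasCompactSupport.intro (isCompact_closedBall (0:E3) 3) fun x hx => ?_
    have : (3:ℝ) < ‖x‖ := by simpa [mem_closedBall, dist_zero_right] using hx
    simp [hA_def, χb_deriv_zero_gt this]
  have hB_supp : HasCompactSupport B := by
    refine HasCompactSupport.intro (isCompact_closedBall (0:E3) 3) fun x hx => ?_
    have : (3:ℝ) < ‖x‖ := by simpa [mem_closedBall, dist_zero_right] using hx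
    simp [hB_def, χb_zero_gt this]
  have hA_int : Integrable A := hA_cont.integrable_of_hasCompactSupport hA_supp
  have hB_int : Integrable B := hB_cont.integrable_of_hasCompactSupport hB_supp
  have h_split : (∫ x, A x) + ∫ x, B x = 0 := by
    rw [← integral_add hA_int hB_int]
    rw [← h0]
    exact integral_congr_ae (Filter.Eventually.of_forall fun x => (hAB x).symm)
  -- evaluate ∫ A via polar coordinates
  have hθ0 : ∀ θ : sphere (0:E3) 1, (θ:E3) ≠ 0 := fun θ => ne_of_mem_sphere θ.2 one_ne_zero
  have hA_eq : ∫ x, A x = (∫ θ : sphere (0:E3) 1, (fderiv ℝ nrm (θ:E3) v * g (θ:E3))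
      ∂((volume : Measure E3).toSphere)) * ∫ r in Ioi (0:ℝ), r^2 * (deriv (χb:ℝ→ℝ) r * (r^2)⁻¹) := by
    refine my_polar A _ (fun r => deriv (χb:ℝ→ℝ) r * (r^2)⁻¹) ?_
    intro θ r
    have hr : (0:ℝ) < r := r.2
    have hsmul : ∀ y : E3, nrm ((r:ℝ) • y) = (r:ℝ) * nrm y := fun y => by
      simp [hnrm_def, norm_smul, abs_of_pos hr]
    have hd1 : DifferentiableAt ℝ nrm ((r:ℝ) • (θ:E3)) :=
      (contDiffAt_id.norm ℝ (smul_ne_zero hr.ne' (hθ0 θ))).differentiableAt one_ne_zero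
    have hd2 : DifferentiableAt ℝ nrm (θ:E3) :=
      (contDiffAt_id.norm ℝ (hθ0 θ)).differentiableAt one_ne_zero
    have hfd : fderiv ℝ nrm ((r:ℝ) • (θ:E3)) v = ((r:ℝ)/(r:ℝ)) * fderiv ℝ nrm (θ:E3) v :=
      my_fderiv_scale hr.ne' hsmul hd1 hd2
    have hgr : g ((r:ℝ) • (θ:E3)) = (((r:ℝ))^2)⁻¹ * g (θ:E3) := my_g_hom hr _
    have hrn : ‖(r:ℝ) • (θ:E3)‖ = (r:ℝ) := by
      rw [norm_smul, Real.norm_eq_abs, abs_of_pos hr, mem_sphere_zero_iff_norm.1 θ.2, mul_one]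
    simp only [hA_def, hgr, hfd, hrn, div_self hr.ne']
    ring
  have hIoiA : ∫ r in Ioi (0:ℝ), r^2 * (deriv (χb:ℝ→ℝ) r * (r^2)⁻¹) = 0 := by
    have hcongr : ∫ r in Ioi (0:ℝ), r^2 * (deriv (χb:ℝ→ℝ) r * (r^2)⁻¹)
        = ∫ r in Ioi (0:ℝ), deriv (χb:ℝ→ℝ) r := by
      refine setIntegral_congr_fun measurableSet_Ioi fun r (hr : r ∈ Ioi (0:ℝ)) => ?_
      have : r ≠ 0 := ne_of_gt hr
      field_simp
    rw [hcongr]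
    rw [setIntegral_eq_integral_of_forall_compl_eq_zero
      (fun r hr => χb_deriv_zero_lt (by simp only [mem_Ioi, not_lt] at hr; linarith))]
    have hder : ∀ r : ℝ, HasDerivAt (χb:ℝ→ℝ) (deriv (χb:ℝ→ℝ) r) r := fun r =>
      ((χb.contDiff (n := (⊤:ℕ∞))).differentiable (by simp) r).hasDerivAt
    have hint1 : Integrable (deriv (χb:ℝ→ℝ)) :=
      ((χb.contDiff (n := (⊤:ℕ∞))).continuous_deriv
        (by simp)).integrable_of_hasCompactSupport χb.hasCompactSupport.deriv
    have hint2 : Integrable (χb:ℝ→ℝ) :=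
      χb.continuous.integrable_of_hasCompactSupport χb.hasCompactSupport
    exact integral_eq_zero_of_hasDerivAt_of_integrable hder hint1 hint2
  -- evaluate ∫ B via polar coordinates
  have hB_eq : ∫ x, B x = (∫ θ : sphere (0:E3) 1, fderiv ℝ g (θ:E3) v
      ∂((volume : Measure E3).toSphere)) * ∫ r in Ioi (0:ℝ), r^2 * (χb r * (((r:ℝ)^2)⁻¹ / r)) := by
    refine my_polar B _ (fun r => χb r * (((r:ℝ)^2)⁻¹ / r)) ?_
    intro θ r
    have hr : (0:ℝ) < r := r.2
    have hd1 : DifferentiableAt ℝ g ((r:ℝ) • (θ:E3)) :=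
      (my_g_smooth hφ (smul_ne_zero hr.ne' (hθ0 θ))).differentiableAt (by simp)
    have hd2 : DifferentiableAt ℝ g (θ:E3) :=
      (my_g_smooth hφ (hθ0 θ)).differentiableAt (by simp)
    have hfd : fderiv ℝ g ((r:ℝ) • (θ:E3)) v = ((((r:ℝ))^2)⁻¹/(r:ℝ)) * fderiv ℝ g (θ:E3) v :=
      my_fderiv_scale hr.ne' (fun y => my_g_hom hr y) hd1 hd2
    have hrn : ‖(r:ℝ) • (θ:E3)‖ = (r:ℝ) := by
      rw [norm_smul, Real.norm_eq_abs, abs_of_pos hr, mem_sphere_zero_iff_norm.1 θ.2, mul_one]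
    simp only [hB_def, hfd, hrn]
    ring
  -- the radial factor for B is positive
  set F : ℝ → ℝ := fun r => χb r * r⁻¹ with hF_def
  have hIoiB : ∫ r in Ioi (0:ℝ), r^2 * (χb r * (((r:ℝ)^2)⁻¹ / r)) = ∫ r in Ioi (0:ℝ), F r := by
    refine setIntegral_congr_fun measurableSet_Ioi fun r (hr : r ∈ Ioi (0:ℝ)) => ?_
    have : r ≠ 0 := ne_of_gt hr
    field_simp [hF_def]
    simp only [hF_def]; field_simp
  have hF_cont : Continuous F := by
    rw [continuous_iff_continuousAt]
    intro r
    by_cases h1 : r < 1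
    · have hFe : F =ᶠ[nhds r] (fun _ => (0:ℝ)) := by
        filter_upwards [Iio_mem_nhds h1] with y hy
        simp [hF_def, χb_zero_lt hy]
      exact (continuousAt_const (y := (0:ℝ))).congr hFe.symm
    · have hr0 : r ≠ 0 := by intro h; rw [h] at h1; norm_num at h1
      exact χb.continuous.continuousAt.mul (continuousAt_id.inv₀ hr0)
  have hF_supp : HasCompactSupport F := by
    refine HasCompactSupport.intro (isCompact_Icc (a := (-3:ℝ)) (b := 3)) fun r hr => ?_
    simp only [mem_Icc, not_and_or, not_le] at hr
    rcases hr with hr | hr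
    · simp [hF_def, χb_zero_lt (by linarith)]
    · simp [hF_def, χb_zero_gt (by linarith)]
  have hF_int : Integrable F := hF_cont.integrable_of_hasCompactSupport hF_supp
  have hF_nonneg : ∀ r ∈ Ioi (0:ℝ), 0 ≤ F r := fun r hr =>
    mul_nonneg χb.nonneg (inv_nonneg.2 (le_of_lt hr))
  have hone : ∀ r ∈ Icc (3/2:ℝ) (5/2:ℝ), (2/5:ℝ) ≤ F r := by
    intro r hr
    have hd : dist r (2:ℝ) ≤ 1/2 := by
      rw [Real.dist_eq, abs_le]; exact ⟨by linarith [hr.1], by linarith [hr.2]⟩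
    have h1 : χb r = 1 := χb.one_of_mem_closedBall hd
    have h2 : (5/2:ℝ)⁻¹ ≤ r⁻¹ := by
      gcongr
      · linarith [hr.1]
      · exact hr.2
    simp only [hF_def, h1, one_mul]
    calc (2/5:ℝ) = (5/2:ℝ)⁻¹ := by norm_num
    _ ≤ r⁻¹ := h2
  have hc : (2/5:ℝ) ≤ ∫ r in Ioi (0:ℝ), F r := by
    have m1 : ∫ r in Icc (3/2:ℝ) (5/2:ℝ), F r ≤ ∫ r in Ioi (0:ℝ), F r := by
      refine setIntegral_mono_set hF_int.integrableOn ?_ ?_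
      · filter_upwards [ae_restrict_mem measurableSet_Ioi] with r hr using hF_nonneg r hr
      · exact Filter.Eventually.of_forall fun r hr => lt_of_lt_of_le (by norm_num) hr.1
    have m2 : (2/5:ℝ) ≤ ∫ r in Icc (3/2:ℝ) (5/2:ℝ), F r := by
      have := setIntegral_mono_on (f := fun _ : ℝ => (2/5:ℝ)) (g := F)
        (integrableOn_const (by rw [Real.volume_Icc]; simp))
        hF_int.integrableOn measurableSet_Icc hone
      rwa [setIntegral_const, Real.volume_real_Icc_of_le (by norm_num), smul_eq_mul,
        (by norm_num : (5/2:ℝ) - 3/2 = 1), one_mul] at this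
    linarith
  -- conclude
  rw [hA_eq, hIoiA, mul_zero, hB_eq, hIoiB, zero_add] at h_split
  rcases mul_eq_zero.1 h_split with h | h
  · exact h
  · exfalso; rw [h] at hc; norm_num at hc

/-- For `F(ξ) = D(∇_ξ)^T(ρ⁻²Ψ(θ)) = ρ⁻³𝓕(θ)` with `Ψ` smooth, the spherical
average of `𝓕` vanishes: `∫_{𝕊₁} 𝓕(θ) ds_θ = 0 ∈ ℝ⁴`. -/
theorem stmt10 (Ψ : EuclideanSpace ℝ (Fin 3) → Fin 9 → ℝ) (hΨ : ContDiff ℝ (⊤ : ℕ∞) Ψ)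
    (k : Fin 4) :
    ∫ θ : sphere (0 : EuclideanSpace ℝ (Fin 3)) 1,
        divD (fun ξ p => (‖ξ‖ ^ 2)⁻¹ * Ψ (‖ξ‖⁻¹ • ξ) p)
          (θ : EuclideanSpace ℝ (Fin 3)) k
      ∂((volume : Measure (EuclideanSpace ℝ (Fin 3))).toSphere) = 0 := by
  classical
  have hν : IsFiniteMeasure ((volume : Measure (EuclideanSpace ℝ (Fin 3))).toSphere) :=
    inferInstance
  -- integrability of each summand on the (compact) sphere
  have hint : ∀ (p : Fin 9) (i : Fin 3),
      Integrable (fun θ : sphere (0:E3) 1 =>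
        Dsym (fun l => if l = i then 1 else 0) p k *
          fderiv ℝ (fun y : E3 => (‖y‖ ^ 2)⁻¹ * Ψ (‖y‖⁻¹ • y) p) (θ:E3)
            (EuclideanSpace.single i 1))
        ((volume : Measure E3).toSphere) := by
    intro p i
    have hφ : ContDiff ℝ (⊤ : ℕ∞) (fun y : E3 => Ψ y p) := contDiff_pi.1 hΨ p
    have hgC : ContDiffOn ℝ (⊤ : ℕ∞) (fun ξ : E3 => (‖ξ‖^2)⁻¹ * Ψ (‖ξ‖⁻¹ • ξ) p) {(0:E3)}ᶜ :=
      fun y hy => (my_g_smooth hφ hy).contDiffWithinAt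
    have hg_fd : ContinuousOn (fderiv ℝ (fun ξ : E3 => (‖ξ‖^2)⁻¹ * Ψ (‖ξ‖⁻¹ • ξ) p)) {(0:E3)}ᶜ :=
      hgC.continuousOn_fderiv_of_isOpen isOpen_compl_singleton (by simp)
    have hcont : Continuous (fun θ : sphere (0:E3) 1 =>
        fderiv ℝ (fun y : E3 => (‖y‖ ^ 2)⁻¹ * Ψ (‖y‖⁻¹ • y) p) (θ:E3)
          (EuclideanSpace.single i 1)) := by
      rw [continuous_iff_continuousAt]
      intro θ
      have hθ : (θ:E3) ∈ ({(0:E3)}ᶜ : Set E3) := ne_of_mem_sphere θ.2 one_ne_zero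
      exact (ContinuousLinearMap.apply ℝ ℝ (EuclideanSpace.single i (1:ℝ))).continuous.continuousAt.comp
        ((hg_fd.continuousAt (isOpen_compl_singleton.mem_nhds hθ)).comp
          continuous_subtype_val.continuousAt)
    refine (Continuous.integrable_of_hasCompactSupport (continuous_const.mul hcont) ?_)
    exact IsCompact.of_isClosed_subset isCompact_univ (isClosed_tsupport _) (subset_univ _)
  have hzero : ∀ (p : Fin 9) (i : Fin 3),
      ∫ θ : sphere (0:E3) 1,
        fderiv ℝ (fun y : E3 => (‖y‖ ^ 2)⁻¹ * Ψ (‖y‖⁻¹ • y) p) (θ:E3)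
          (EuclideanSpace.single i 1) ∂((volume : Measure E3).toSphere) = 0 := by
    intro p i
    exact my_main (contDiff_pi.1 hΨ p) (EuclideanSpace.single i 1)
  simp only [divD]
  rw [integral_finset_sum _ (fun p _ => integrable_finset_sum _ (fun i _ => hint p i))]
  refine Finset.sum_eq_zero fun p _ => ?_
  rw [integral_finset_sum _ (fun i _ => hint p i)]
  refine Finset.sum_eq_zero fun i _ => ?_
  rw [integral_const_mul, hzero p i, mul_zero]
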